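/- arXiv:2002.12422 — 2 statements merged into one kernel-verified Lean document; each statement's English description precedes it below -/
import Mathlib

section
/- Let (p_n)_{n∈ℕ} be a sequence in V, let p ∈ V, and let L be either a dual face of K or L = K (with the conventions ν_K = ν and H_K⁺ = {0}). Then the sequence of functions u ↦ ν(p_n − u) − ν(p_n) converges, uniformly on every bounded subset of V, to the function u ↦ ν_L(p − u) − ν_L(p) if and only if for every q ∈ H_L⁺ the distances dist(p_n, p + q + H_L⁺) = inf{‖p_n − (p + q + h)‖ : h ∈ H_L⁺} tend to 0 as n → ∞. -/
/-!
Both sides of the criterion are equivalent to two asymptotic properties of `p_n`: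
(A) `p_n - p` approaches the subspace `H_L`, and (B) every gap `ξ_ℓ(p_n) - ξ_k(p_n)` with
`ℓ ∈ L`, `k ∉ L` tends to `+∞`.

Under (B) the maximum defining `ν(p_n - u)`, `u` bounded, is attained in `L`, and `ν_L` is
equivariant under translations by `H_L`; with (A) this gives uniform convergence. Conversely,
evaluating the limit at `u = -t w`, where `w` lies on the facet `A_k` only and `t` is large,
isolates `ξ_k(p_n) - ν(p_n)`: it converges to `ξ_k(p) - ν_L(p)` for `k ∈ L` and tends to `-∞`
for `k ∉ L`. This gives (B), and (A) because a linear map is bounded below on a complement of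
its kernel.

On the distance side, (A) and (B) make `y_n - q` a point of `H_L⁺` once the gaps are large,
where `y_n ∈ H_L` is close to `p_n - p`; conversely, points of `p + s q + H_L⁺` have gaps at
least those of `p + s q`, which are large for large `s`.
-/

open Bornology

/-- The polyhedral asymmetric norm `ν(u) = max {ξ_k(u) : k ∈ K}`. -/
noncomputable def nu {V : Type*} [AddCommGroup V] [Module ℝ V] {m : ℕ}
    (ξ : Fin (m + 1) → V →ₗ[ℝ] ℝ) (u : V) : ℝ :=
  Finset.univ.sup' Finset.univ_nonempty fun k => ξ k u

/-- `ν_L(u) = max {ξ_ℓ(u) : ℓ ∈ L}` (junk value `0` for `L = ∅`). -/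
noncomputable def nuL {V : Type*} [AddCommGroup V] [Module ℝ V] {m : ℕ}
    (ξ : Fin (m + 1) → V →ₗ[ℝ] ℝ) (L : Finset (Fin (m + 1))) (u : V) : ℝ :=
  if h : L.Nonempty then L.sup' h fun ℓ => ξ ℓ u else 0

/-- `L ⊆ K` is a dual face if there is `v` with `ν(v) = 1` and `L = {k : ξ_k(v) = 1}`. -/
def IsDualFace {V : Type*} [AddCommGroup V] [Module ℝ V] {m : ℕ}
    (ξ : Fin (m + 1) → V →ₗ[ℝ] ℝ) (L : Finset (Fin (m + 1))) : Prop :=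
  ∃ v : V, nu ξ v = 1 ∧ ∀ k, k ∈ L ↔ ξ k v = 1

/-- `H_L = {u : ξ_k(u) = ξ_ℓ(u) for all k, ℓ ∈ L}`. -/
def HL {V : Type*} [AddCommGroup V] [Module ℝ V] {m : ℕ}
    (ξ : Fin (m + 1) → V →ₗ[ℝ] ℝ) (L : Finset (Fin (m + 1))) : Set V :=
  {u : V | ∀ k ∈ L, ∀ l ∈ L, ξ k u = ξ l u}

/-- `H_L⁺ = {v ∈ H_L : ξ_ℓ(v) > ξ_k(v) for all ℓ ∈ L, k ∈ K∖L}`.  (For `L = K` this set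
equals `H_K`, which is `{0}` for a polyhedral norm, in accordance with the convention
`H_K⁺ = {0}`.) -/
def HLplus {V : Type*} [AddCommGroup V] [Module ℝ V] {m : ℕ}
    (ξ : Fin (m + 1) → V →ₗ[ℝ] ℝ) (L : Finset (Fin (m + 1))) : Set V :=
  {v : V | (∀ k ∈ L, ∀ l ∈ L, ξ k v = ξ l v) ∧
    ∀ l ∈ L, ∀ k, k ∉ L → ξ k v < ξ l v}


open Filter Topology

section Approximation

theorem LinearMap.exists_tendsto_sub_mem_ker {V W ι : Type*} [NormedAddCommGroup V]
    [NormedSpace ℝ V] [FiniteDimensional ℝ V] [NormedAddCommGroup W] [NormedSpace ℝ W]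
    {l : Filter ι} (f : V →ₗ[ℝ] W) {x : ι → V} (hx : Tendsto (fun i => f (x i)) l (𝓝 0)) :
    ∃ y : ι → V, (∀ i, y i ∈ LinearMap.ker f) ∧ Tendsto (fun i => x i - y i) l (𝓝 0) := by
  obtain ⟨C, hC⟩ := (LinearMap.ker f).exists_isCompl
  set π := C.projection (LinearMap.ker f) hC.symm
  have hinj : Function.Injective (f ∘ₗ C.subtype) := by
    rw [← LinearMap.ker_eq_bot, Submodule.eq_bot_iff]
    rintro ⟨c, hc⟩ hfc
    exact Subtype.ext (Submodule.disjoint_def.1 hC.symm.disjoint c hc hfc)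
  obtain ⟨K, -, hK⟩ := (f ∘ₗ C.subtype).injective_iff_antilipschitz.1 hinj
  have hker : ∀ v, v - π v ∈ LinearMap.ker f := C.sub_projection_mem hC.symm
  have hbound : ∀ v, ‖π v‖ ≤ K * ‖f v‖ := by
    intro v
    have hfπ : f (π v) = f v := (by simpa [sub_eq_zero] using hker v : f v = f (π v)).symm
    simpa [dist_eq_norm, hfπ] using
      hK.le_mul_dist ⟨π v, C.projection_apply_mem hC.symm v⟩ 0
  refine ⟨fun i => x i - π (x i), fun i => hker (x i), ?_⟩
  simp_rw [sub_sub_cancel]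
  exact squeeze_zero_norm (fun i => hbound (x i)) (by simpa using hx.norm.const_mul (K : ℝ))

theorem exists_tendsto_sub_of_tendsto_infDist {E : Type*} [SeminormedAddCommGroup E]
    {S : Set E} (hS : S.Nonempty) {x : ℕ → E}
    (hx : Tendsto (fun n => Metric.infDist (x n) S) atTop (𝓝 0)) :
    ∃ y : ℕ → E, (∀ n, y n ∈ S) ∧ Tendsto (fun n => x n - y n) atTop (𝓝 0) := by
  have hnear : ∀ n : ℕ, ∃ y ∈ S, dist (x n) y < Metric.infDist (x n) S + 1 / (n + 1) :=
    fun n => (Metric.infDist_lt_iff hS).1 (lt_add_of_pos_right _ Nat.one_div_pos_of_nat)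
  choose y hyS hy using hnear
  refine ⟨y, hyS, squeeze_zero_norm (fun n => ?_)
    (by simpa using hx.add tendsto_one_div_add_atTop_nhds_zero_nat)⟩
  simpa [← dist_eq_norm] using (hy n).le

end Approximation

section Polyhedral

variable {V : Type*} [AddCommGroup V] [Module ℝ V] {m : ℕ} (ξ : Fin (m + 1) → V →ₗ[ℝ] ℝ)
  {L : Finset (Fin (m + 1))}

theorem nuL_le_iff (hL : L.Nonempty) {u : V} {c : ℝ} :
    nuL ξ L u ≤ c ↔ ∀ ℓ ∈ L, ξ ℓ u ≤ c := by
  rw [nuL, dif_pos hL, Finset.sup'_le_iff]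

theorem apply_le_nuL {ℓ : Fin (m + 1)} (hℓ : ℓ ∈ L) (u : V) : ξ ℓ u ≤ nuL ξ L u := by
  rw [nuL, dif_pos ⟨ℓ, hℓ⟩]
  exact Finset.le_sup' (fun ℓ => ξ ℓ u) hℓ

theorem exists_nuL_eq (hL : L.Nonempty) (u : V) : ∃ ℓ ∈ L, nuL ξ L u = ξ ℓ u := by
  rw [nuL, dif_pos hL]
  exact Finset.exists_mem_eq_sup' hL _

theorem nu_le_iff {u : V} {c : ℝ} : nu ξ u ≤ c ↔ ∀ k, ξ k u ≤ c := by
  simp [nu, Finset.sup'_le_iff]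

theorem apply_le_nu (k : Fin (m + 1)) (u : V) : ξ k u ≤ nu ξ u :=
  Finset.le_sup' (fun k => ξ k u) (Finset.mem_univ k)

theorem exists_nu_eq (u : V) : ∃ k, nu ξ u = ξ k u := by
  obtain ⟨k, -, hk⟩ := Finset.exists_mem_eq_sup' Finset.univ_nonempty fun k => ξ k u
  exact ⟨k, hk⟩

theorem nu_eq_nuL_of_forall_le (hL : L.Nonempty) {u : V}
    (h : ∀ ℓ ∈ L, ∀ k ∉ L, ξ k u ≤ ξ ℓ u) : nu ξ u = nuL ξ L u := by
  obtain ⟨ℓ, hℓ⟩ := hL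
  refine le_antisymm ((nu_le_iff ξ).2 fun k => ?_)
    ((nuL_le_iff ξ ⟨ℓ, hℓ⟩).2 fun j _ => apply_le_nu ξ j u)
  by_cases hk : k ∈ L
  · exact apply_le_nuL ξ hk u
  · exact (h ℓ hℓ k hk).trans (apply_le_nuL ξ hℓ u)

theorem nuL_add_of_mem_HL {ℓ₀ : Fin (m + 1)} (hℓ₀ : ℓ₀ ∈ L) {y : V} (hy : y ∈ HL ξ L) (x : V) :
    nuL ξ L (y + x) = ξ ℓ₀ y + nuL ξ L x := by
  obtain ⟨ℓ, hℓ, hx⟩ := exists_nuL_eq ξ ⟨ℓ₀, hℓ₀⟩ x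
  refine le_antisymm ((nuL_le_iff ξ ⟨ℓ₀, hℓ₀⟩).2 fun k hk => ?_) ?_
  · rw [map_add, hy k hk ℓ₀ hℓ₀]
    linarith [apply_le_nuL ξ hk x]
  · have := apply_le_nuL ξ hℓ (y + x)
    rw [map_add, hy ℓ hℓ ℓ₀ hℓ₀] at this
    linarith

def HLSubmodule (ξ : Fin (m + 1) → V →ₗ[ℝ] ℝ) (L : Finset (Fin (m + 1))) : Submodule ℝ V where
  carrier := HL ξ L
  add_mem' ha hb k hk l hl := by simp only [map_add, ha k hk l hl, hb k hk l hl]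
  zero_mem' _ _ _ _ := by simp
  smul_mem' c _ ha k hk l hl := by simp only [map_smul, ha k hk l hl]

theorem smul_mem_HLplus {s : ℝ} (hs : 0 < s) {v : V} (hv : v ∈ HLplus ξ L) :
    s • v ∈ HLplus ξ L :=
  ⟨(HLSubmodule ξ L).smul_mem s hv.1, fun l hl k hk => by
    simpa only [map_smul, smul_eq_mul] using mul_lt_mul_of_pos_left (hv.2 l hl k hk) hs⟩

theorem zero_mem_HLplus_univ : (0 : V) ∈ HLplus ξ Finset.univ :=
  ⟨fun _ _ _ _ => by simp, fun _ _ k hk => absurd (Finset.mem_univ k) hk⟩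

theorem IsDualFace.nonempty (hL : IsDualFace ξ L) : L.Nonempty := by
  obtain ⟨v, hv, hL⟩ := hL
  obtain ⟨k, hk⟩ := exists_nu_eq ξ v
  exact ⟨k, (hL k).2 (hk ▸ hv)⟩

theorem IsDualFace.nonempty_HLplus (hL : IsDualFace ξ L) : (HLplus ξ L).Nonempty := by
  obtain ⟨v, hv, hL⟩ := hL
  refine ⟨v, fun k hk l hl => by rw [(hL k).1 hk, (hL l).1 hl], fun l hl k hk => ?_⟩
  rw [(hL l).1 hl]
  exact lt_of_le_of_ne (hv ▸ apply_le_nu ξ k v) fun h => hk ((hL k).2 h)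

theorem tendsto_apply_add_smul_sub_atBot (f : V →ₗ[ℝ] ℝ) (x : V) {w : V} (hw : f w < 1) :
    Tendsto (fun t : ℝ => f (x + t • w) - t) atTop atBot := by
  refine (tendsto_atBot_add_const_left _ (f x)
    (tendsto_id.atTop_mul_const_of_neg (sub_neg.2 hw))).congr fun t => ?_
  simp only [map_add, map_smul, smul_eq_mul, id]
  ring

theorem eventually_nuL_add_smul_eq {ℓ : Fin (m + 1)} (hℓ : ℓ ∈ L) {w : V} (hwℓ : ξ ℓ w = 1)
    (hw : ∀ j, j ≠ ℓ → ξ j w < 1) (x : V) :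
    ∀ᶠ t : ℝ in atTop, nuL ξ L (x + t • w) = ξ ℓ x + t := by
  have hfar : ∀ᶠ t : ℝ in atTop, ∀ j, j ≠ ℓ → ξ j (x + t • w) - t ≤ ξ ℓ x :=
    eventually_all.2 fun j => eventually_imp_distrib_left.2 fun hj =>
      (tendsto_apply_add_smul_sub_atBot (ξ j) x (hw j hj)).eventually_le_atBot _
  filter_upwards [hfar] with t ht
  have hℓt : ξ ℓ (x + t • w) = ξ ℓ x + t := by simp [hwℓ]
  refine le_antisymm ((nuL_le_iff ξ ⟨ℓ, hℓ⟩).2 fun j _ => ?_) (hℓt ▸ apply_le_nuL ξ hℓ _)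
  rcases eq_or_ne j ℓ with rfl | hj
  · exact hℓt.le
  · linarith [ht j hj]

theorem tendsto_nuL_add_smul_sub_atBot (hL : L.Nonempty) {w : V} (hw : ∀ ℓ ∈ L, ξ ℓ w < 1)
    (x : V) : Tendsto (fun t : ℝ => nuL ξ L (x + t • w) - t) atTop atBot := by
  refine tendsto_atBot.2 fun T => ?_
  filter_upwards [(eventually_all_finset L).2 fun ℓ hℓ =>
    (tendsto_apply_add_smul_sub_atBot (ξ ℓ) x (hw ℓ hℓ)).eventually_le_atBot T] with t ht
  have := (nuL_le_iff ξ hL).2 fun ℓ hℓ => (by linarith [ht ℓ hℓ] : ξ ℓ (x + t • w) ≤ T + t)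
  linarith

end Polyhedral

section Normed

variable {V : Type*} [NormedAddCommGroup V] [NormedSpace ℝ V] {m : ℕ}
  (ξ : Fin (m + 1) → V →ₗ[ℝ] ℝ) {L : Finset (Fin (m + 1))}

theorem exists_abs_apply_le [FiniteDimensional ℝ V] :
    ∃ C, 0 ≤ C ∧ ∀ k (x : V), |ξ k x| ≤ C * ‖x‖ := by
  refine ⟨∑ k, ‖LinearMap.toContinuousLinearMap (ξ k)‖, by positivity, fun k x => ?_⟩
  calc |ξ k x| = ‖LinearMap.toContinuousLinearMap (ξ k) x‖ := rfl
    _ ≤ ‖LinearMap.toContinuousLinearMap (ξ k)‖ * ‖x‖ := ContinuousLinearMap.le_opNorm _ _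
    _ ≤ _ := by
      gcongr
      exact Finset.single_le_sum (f := fun k => ‖LinearMap.toContinuousLinearMap (ξ k)‖)
        (fun _ _ => norm_nonneg _) (Finset.mem_univ k)

theorem abs_nuL_add_sub_nuL_le {C : ℝ} (hC : ∀ k (x : V), |ξ k x| ≤ C * ‖x‖) (hL : L.Nonempty)
    (x e : V) : |nuL ξ L (x + e) - nuL ξ L x| ≤ C * ‖e‖ := by
  have hshift : ∀ a b : V, nuL ξ L (a + b) ≤ nuL ξ L a + C * ‖b‖ := fun a b =>
    (nuL_le_iff ξ hL).2 fun ℓ hℓ => by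
      rw [map_add]
      linarith [apply_le_nuL ξ hℓ a, (abs_le.1 (hC ℓ b)).2]
  have := hshift (x + e) (-e)
  rw [add_neg_cancel_right, norm_neg] at this
  exact abs_sub_le_iff.2 ⟨by linarith [hshift x e], by linarith⟩

theorem nu_sub_eq_nuL_sub {C : ℝ} (hC : ∀ k (x : V), |ξ k x| ≤ C * ‖x‖) (hL : L.Nonempty)
    {x u : V} (hgap : ∀ ℓ ∈ L, ∀ k ∉ L, 2 * C * ‖u‖ ≤ ξ ℓ x - ξ k x) :
    nu ξ (x - u) = nuL ξ L (x - u) :=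
  nu_eq_nuL_of_forall_le ξ hL fun ℓ hℓ k hk => by
    rw [map_sub, map_sub]
    linarith [hgap ℓ hℓ k hk, (abs_le.1 (hC ℓ u)).2, (abs_le.1 (hC k u)).1]

end Normed

section Sequences

variable {V : Type*} [NormedAddCommGroup V] [NormedSpace ℝ V] {m : ℕ}
  (ξ : Fin (m + 1) → V →ₗ[ℝ] ℝ) (L : Finset (Fin (m + 1))) (pseq : ℕ → V) (p : V)

def TendstoHorofunction : Prop :=
  ∀ R > (0 : ℝ), ∀ ε > (0 : ℝ), ∃ N : ℕ, ∀ n ≥ N, ∀ u : V, ‖u‖ ≤ R →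
    |nu ξ (pseq n - u) - nu ξ (pseq n) - (nuL ξ L (p - u) - nuL ξ L p)| < ε

def ApproachesHL : Prop :=
  ∃ y : ℕ → V, (∀ n, y n ∈ HL ξ L) ∧ Tendsto (fun n => pseq n - p - y n) atTop (𝓝 0)

def GapsTendToInfinity : Prop :=
  ∀ ℓ ∈ L, ∀ k ∉ L, Tendsto (fun n => ξ ℓ (pseq n) - ξ k (pseq n)) atTop atTop

variable {ξ L pseq p}

theorem GapsTendToInfinity.eventually_ge (h : GapsTendToInfinity ξ L pseq) (T : ℝ) :
    ∀ᶠ n in atTop, ∀ ℓ ∈ L, ∀ k ∉ L, T ≤ ξ ℓ (pseq n) - ξ k (pseq n) :=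
  (eventually_all_finset L).2 fun ℓ hℓ => eventually_all.2 fun k =>
    eventually_imp_distrib_left.2 fun hk => (h ℓ hℓ k hk).eventually_ge_atTop T

theorem GapsTendToInfinity.of_tendsto_sub [FiniteDimensional ℝ V]
    (h : GapsTendToInfinity ξ L pseq) {z : ℕ → V} {c : V}
    (hz : Tendsto (fun n => pseq n - z n) atTop (𝓝 c)) : GapsTendToInfinity ξ L z := by
  intro ℓ hℓ k hk
  have hφ := ((ξ k - ξ ℓ).continuous_of_finiteDimensional.tendsto c).comp hz
  refine ((h ℓ hℓ k hk).atTop_add hφ).congr fun n => ?_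
  simp only [Function.comp_apply, LinearMap.sub_apply, map_sub]
  ring

theorem TendstoHorofunction.tendsto_apply (h : TendstoHorofunction ξ L pseq p) (v : V) :
    Tendsto (fun n => nu ξ (pseq n + v) - nu ξ (pseq n)) atTop
      (𝓝 (nuL ξ L (p + v) - nuL ξ L p)) := by
  refine Metric.tendsto_atTop.2 fun ε hε => ?_
  obtain ⟨N, hN⟩ := h (‖v‖ + 1) (by positivity) ε hε
  exact ⟨N, fun n hn => by simpa [Real.dist_eq, sub_sub_eq_add_sub] using hN n hn (-v) (by simp)⟩

theorem TendstoHorofunction.tendsto_apply_sub_nu_of_mem (h : TendstoHorofunction ξ L pseq p)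
    (hfacet : ∀ k, ∃ u : V, ξ k u = 1 ∧ ∀ l, l ≠ k → ξ l u < 1) {ℓ : Fin (m + 1)} (hℓ : ℓ ∈ L) :
    Tendsto (fun n => ξ ℓ (pseq n) - nu ξ (pseq n)) atTop (𝓝 (ξ ℓ p - nuL ξ L p)) := by
  obtain ⟨w, hwℓ, hw⟩ := hfacet ℓ
  set b := ξ ℓ p - nuL ξ L p
  have hfar : ∀ᶠ t : ℝ in atTop, ∀ j, j ≠ ℓ → ξ j (0 + t • w) - t < b - 1 :=
    eventually_all.2 fun j => eventually_imp_distrib_left.2 fun hj =>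
      (tendsto_apply_add_smul_sub_atBot (ξ j) 0 (hw j hj)).eventually_lt_atBot _
  obtain ⟨t, hfar, hval⟩ := (hfar.and (eventually_nuL_add_smul_eq ξ hℓ hwℓ hw p)).exists
  have hlim : Tendsto (fun n => nu ξ (pseq n + t • w) - nu ξ (pseq n)) atTop (𝓝 (b + t)) := by
    convert h.tendsto_apply (t • w) using 2
    rw [hval]
    ring
  -- Once the limit exceeds `b + t - 1`, the maximum in `ν(p_n + t w)` can only be attained at `ℓ`.
  have heq : ∀ᶠ n in atTop,
      nu ξ (pseq n + t • w) - nu ξ (pseq n) - t = ξ ℓ (pseq n) - nu ξ (pseq n) := by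
    filter_upwards [hlim.eventually (lt_mem_nhds (sub_one_lt (b + t)))] with n hn
    obtain ⟨j, hj⟩ := exists_nu_eq ξ (pseq n + t • w)
    obtain rfl : j = ℓ := by
      by_contra hjℓ
      rw [zero_add] at hfar
      rw [hj, map_add] at hn
      linarith [hfar j hjℓ, apply_le_nu ξ j (pseq n)]
    rw [hj, map_add, map_smul, hwℓ, smul_eq_mul, mul_one]
    ring
  simpa using (hlim.sub_const t).congr' heq

theorem TendstoHorofunction.tendsto_apply_sub_nu_of_notMem (h : TendstoHorofunction ξ L pseq p)
    (hL : L.Nonempty) (hfacet : ∀ k, ∃ u : V, ξ k u = 1 ∧ ∀ l, l ≠ k → ξ l u < 1)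
    {k : Fin (m + 1)} (hk : k ∉ L) :
    Tendsto (fun n => ξ k (pseq n) - nu ξ (pseq n)) atTop atBot := by
  obtain ⟨w, hwk, hw⟩ := hfacet k
  refine tendsto_atBot.2 fun T => ?_
  obtain ⟨t, ht⟩ := ((tendsto_nuL_add_smul_sub_atBot ξ hL
    (fun ℓ hℓ => hw ℓ (ne_of_mem_of_not_mem hℓ hk)) p).eventually_le_atBot
      (T + nuL ξ L p - 1)).exists
  filter_upwards [(h.tendsto_apply (t • w)).eventually (gt_mem_nhds (lt_add_one _))] with n hn
  have := apply_le_nu ξ k (pseq n + t • w)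
  rw [map_add, map_smul, hwk, smul_eq_mul, mul_one] at this
  linarith

theorem TendstoHorofunction.gapsTendToInfinity (h : TendstoHorofunction ξ L pseq p)
    (hL : L.Nonempty) (hfacet : ∀ k, ∃ u : V, ξ k u = 1 ∧ ∀ l, l ≠ k → ξ l u < 1) :
    GapsTendToInfinity ξ L pseq := fun ℓ hℓ k hk =>
  ((h.tendsto_apply_sub_nu_of_mem hfacet hℓ).add_atTop (tendsto_neg_atBot_atTop.comp
    (h.tendsto_apply_sub_nu_of_notMem hL hfacet hk))).congr fun n => by
      simp only [Function.comp_apply]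
      ring

theorem approachesHL_of_tendsto_infDist {z : V} (hz : z ∈ HLplus ξ L)
    (h : Tendsto (fun n => Metric.infDist (pseq n) ((fun h => p + z + h) '' HLplus ξ L))
      atTop (𝓝 0)) : ApproachesHL ξ L pseq p := by
  obtain ⟨w, hw, hlim⟩ := exists_tendsto_sub_of_tendsto_infDist ((Set.nonempty_of_mem hz).image _) h
  choose v hv hwv using hw
  refine ⟨fun n => z + v n, fun n => (HLSubmodule ξ L).add_mem hz.1 (hv n).1,
    hlim.congr fun n => ?_⟩
  simp only [← hwv n, add_assoc, sub_sub]

end Sequences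

section Criterion

variable {V : Type*} [NormedAddCommGroup V] [NormedSpace ℝ V] [FiniteDimensional ℝ V] {m : ℕ}
  {ξ : Fin (m + 1) → V →ₗ[ℝ] ℝ} {L : Finset (Fin (m + 1))} {pseq : ℕ → V} {p : V}

theorem TendstoHorofunction.approachesHL (h : TendstoHorofunction ξ L pseq p)
    (hL : L.Nonempty) (hfacet : ∀ k, ∃ u : V, ξ k u = 1 ∧ ∀ l, l ≠ k → ξ l u < 1) :
    ApproachesHL ξ L pseq p := by
  obtain ⟨ℓ₀, hℓ₀⟩ := hL
  let f : V →ₗ[ℝ] (L → ℝ) := LinearMap.pi fun ℓ : L => ξ ℓ - ξ ℓ₀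
  have hf : Tendsto (fun n => f (pseq n - p)) atTop (𝓝 0) := by
    refine tendsto_pi_nhds.2 fun ℓ => ?_
    have hlim := ((h.tendsto_apply_sub_nu_of_mem hfacet ℓ.2).sub
      (h.tendsto_apply_sub_nu_of_mem hfacet hℓ₀)).sub_const (ξ ℓ p - ξ ℓ₀ p)
    rw [show ξ ℓ p - nuL ξ L p - (ξ ℓ₀ p - nuL ξ L p) - (ξ ℓ p - ξ ℓ₀ p) = 0 by ring] at hlim
    refine hlim.congr fun n => ?_
    simp only [f, LinearMap.pi_apply, LinearMap.sub_apply, map_sub]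
    ring
  obtain ⟨y, hy, hlim⟩ := f.exists_tendsto_sub_mem_ker hf
  refine ⟨y, fun n k hk l hl => ?_, by simpa only [sub_sub] using hlim⟩
  have hyk := congr_fun (LinearMap.mem_ker.1 (hy n)) ⟨k, hk⟩
  have hyl := congr_fun (LinearMap.mem_ker.1 (hy n)) ⟨l, hl⟩
  simp only [f, LinearMap.pi_apply, LinearMap.sub_apply, Pi.zero_apply] at hyk hyl
  linarith

theorem tendstoHorofunction_of_approachesHL (hL : L.Nonempty) (hA : ApproachesHL ξ L pseq p)
    (hB : GapsTendToInfinity ξ L pseq) : TendstoHorofunction ξ L pseq p := by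
  intro R _ ε hε
  obtain ⟨C, hC0, hC⟩ := exists_abs_apply_le ξ
  obtain ⟨y, hyHL, hy⟩ := hA
  obtain ⟨ℓ₀, hℓ₀⟩ := id hL
  have hsmall : ∀ᶠ n in atTop, 2 * C * ‖pseq n - p - y n‖ < ε := by
    have := hy.norm.const_mul (2 * C)
    rw [norm_zero, mul_zero] at this
    exact this.eventually (gt_mem_nhds hε)
  obtain ⟨N, hN⟩ := eventually_atTop.1 ((hB.eventually_ge (2 * C * R)).and hsmall)
  refine ⟨N, fun n hn u hu => ?_⟩
  obtain ⟨hgap, he⟩ := hN n hn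
  set e := pseq n - p - y n with he_def
  have hgap_u : ∀ ℓ ∈ L, ∀ k ∉ L, 2 * C * ‖u‖ ≤ ξ ℓ (pseq n) - ξ k (pseq n) :=
    fun ℓ hℓ k hk => le_trans (by gcongr) (hgap ℓ hℓ k hk)
  have hν := nu_sub_eq_nuL_sub ξ hC hL hgap_u
  have hν₀ : nu ξ (pseq n) = nuL ξ L (pseq n) := nu_eq_nuL_of_forall_le ξ hL fun ℓ hℓ k hk =>
    sub_nonneg.1 ((by positivity : (0 : ℝ) ≤ 2 * C * ‖u‖).trans (hgap_u ℓ hℓ k hk))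
  rw [hν, hν₀, show pseq n - u = y n + (p - u + e) by rw [he_def]; abel,
    show pseq n = y n + (p + e) by rw [he_def]; abel,
    nuL_add_of_mem_HL ξ hℓ₀ (hyHL n), nuL_add_of_mem_HL ξ hℓ₀ (hyHL n)]
  calc _ = |(nuL ξ L (p - u + e) - nuL ξ L (p - u)) - (nuL ξ L (p + e) - nuL ξ L p)| := by
        ring_nf
    _ ≤ C * ‖e‖ + C * ‖e‖ := (abs_sub _ _).trans (add_le_add
        (abs_nuL_add_sub_nuL_le ξ hC hL _ _) (abs_nuL_add_sub_nuL_le ξ hC hL _ _))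
    _ < ε := by linarith

theorem tendstoHorofunction_iff (hL : L.Nonempty)
    (hfacet : ∀ k, ∃ u : V, ξ k u = 1 ∧ ∀ l, l ≠ k → ξ l u < 1) :
    TendstoHorofunction ξ L pseq p ↔ ApproachesHL ξ L pseq p ∧ GapsTendToInfinity ξ L pseq :=
  ⟨fun h => ⟨h.approachesHL hL hfacet, h.gapsTendToInfinity hL hfacet⟩,
    fun h => tendstoHorofunction_of_approachesHL hL h.1 h.2⟩

theorem tendsto_infDist_of_approachesHL (hA : ApproachesHL ξ L pseq p)
    (hB : GapsTendToInfinity ξ L pseq) {q : V} (hq : q ∈ HLplus ξ L) :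
    Tendsto (fun n => Metric.infDist (pseq n) ((fun h => p + q + h) '' HLplus ξ L))
      atTop (𝓝 0) := by
  obtain ⟨y, hyHL, hy⟩ := hA
  have hgap : GapsTendToInfinity ξ L fun n => y n - q :=
    hB.of_tendsto_sub (c := p + q) <| tendsto_sub_nhds_zero_iff.1 <| hy.congr fun n => by abel
  have hmem : ∀ᶠ n in atTop, y n - q ∈ HLplus ξ L := by
    filter_upwards [hgap.eventually_ge 1] with n hn
    exact ⟨(HLSubmodule ξ L).sub_mem (hyHL n) hq.1, fun ℓ hℓ k hk =>
      sub_pos.1 (one_pos.trans_le (hn ℓ hℓ k hk))⟩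
  refine squeeze_zero' (.of_forall fun n => Metric.infDist_nonneg) ?_ (by simpa using hy.norm)
  filter_upwards [hmem] with n hn
  calc _ ≤ dist (pseq n) (p + q + (y n - q)) :=
        Metric.infDist_le_dist_of_mem (Set.mem_image_of_mem _ hn)
    _ = ‖pseq n - p - y n‖ := by rw [dist_eq_norm]; congr 1; abel

theorem gapsTendToInfinity_of_tendsto_infDist {z : V} (hz : z ∈ HLplus ξ L)
    (h : ∀ q ∈ HLplus ξ L,
      Tendsto (fun n => Metric.infDist (pseq n) ((fun h => p + q + h) '' HLplus ξ L))
        atTop (𝓝 0)) : GapsTendToInfinity ξ L pseq := by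
  intro ℓ hℓ k hk
  refine tendsto_atTop.2 fun T => ?_
  have hgrow := tendsto_id.atTop_mul_const (sub_pos.2 (hz.2 ℓ hℓ k hk))
  obtain ⟨s, hs, hs0⟩ := ((hgrow.eventually_ge_atTop (T + 1 - (ξ ℓ p - ξ k p))).and
    (eventually_gt_atTop 0)).exists
  obtain ⟨w, hw, hlim⟩ :=
    exists_tendsto_sub_of_tendsto_infDist ((Set.nonempty_of_mem hz).image _)
      (h _ (smul_mem_HLplus ξ hs0 hz))
  have hφ := ((ξ ℓ - ξ k).continuous_of_finiteDimensional.tendsto 0).comp hlim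
  rw [map_zero] at hφ
  filter_upwards [hφ.eventually (lt_mem_nhds neg_one_lt_zero)] with n hn
  obtain ⟨v, hv, hwn⟩ := hw n
  have hpos : ξ k v < ξ ℓ v := hv.2 ℓ hℓ k hk
  simp only [Function.comp_apply, LinearMap.sub_apply, map_sub, ← hwn, map_add, map_smul,
    smul_eq_mul, id] at hn hs
  linarith

theorem tendsto_infDist_iff (hplus : (HLplus ξ L).Nonempty) :
    (∀ q ∈ HLplus ξ L,
      Tendsto (fun n => Metric.infDist (pseq n) ((fun h => p + q + h) '' HLplus ξ L))
        atTop (𝓝 0)) ↔ ApproachesHL ξ L pseq p ∧ GapsTendToInfinity ξ L pseq := by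
  obtain ⟨z, hz⟩ := hplus
  exact ⟨fun h => ⟨approachesHL_of_tendsto_infDist hz (h z hz),
    gapsTendToInfinity_of_tendsto_infDist hz h⟩,
    fun h q hq => tendsto_infDist_of_approachesHL h.1 h.2 hq⟩

end Criterion

theorem horofunction_convergence_criterion_general
    {V : Type*} [NormedAddCommGroup V] [InnerProductSpace ℝ V] [FiniteDimensional ℝ V]
    {m : ℕ} (ξ : Fin (m + 1) → V →ₗ[ℝ] ℝ)
    (hfacet : ∀ k, ∃ u : V, ξ k u = 1 ∧ ∀ l, l ≠ k → ξ l u < 1)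
    (L : Finset (Fin (m + 1))) (hL : IsDualFace ξ L ∨ L = Finset.univ)
    (pseq : ℕ → V) (p : V) :
    (∀ R > (0 : ℝ), ∀ ε > (0 : ℝ), ∃ N : ℕ, ∀ n ≥ N, ∀ u : V, ‖u‖ ≤ R →
        |nu ξ (pseq n - u) - nu ξ (pseq n) - (nuL ξ L (p - u) - nuL ξ L p)| < ε) ↔
      (∀ q ∈ HLplus ξ L,
        Filter.Tendsto (fun n => Metric.infDist (pseq n) ((fun h => p + q + h) '' HLplus ξ L))
          Filter.atTop (nhds 0)) := by
  have hLne : L.Nonempty := hL.elim (IsDualFace.nonempty ξ) fun h => h ▸ Finset.univ_nonempty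
  have hplus : (HLplus ξ L).Nonempty :=
    hL.elim (IsDualFace.nonempty_HLplus ξ) fun h => h ▸ ⟨0, zero_mem_HLplus_univ ξ⟩
  exact (tendstoHorofunction_iff hLne hfacet).trans (tendsto_infDist_iff hplus).symm

/-- Let `(p_n)` be a sequence in `V`, `p ∈ V`, and `L` a dual face or
`L = K`. The functions `u ↦ ν(p_n−u) − ν(p_n)` converge uniformly on bounded subsets of `V`
to `u ↦ ν_L(p−u) − ν_L(p)` if and only if for every `q ∈ H_L⁺` the distances
`dist(p_n, p + q + H_L⁺)` tend to `0`. -/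
theorem horofunction_convergence_criterion
    {V : Type*} [NormedAddCommGroup V] [InnerProductSpace ℝ V] [FiniteDimensional ℝ V]
    {m : ℕ} (ξ : Fin (m + 1) → V →ₗ[ℝ] ℝ)
    (hfacet : ∀ k, ∃ u : V, ξ k u = 1 ∧ ∀ l, l ≠ k → ξ l u < 1)
    (hpos : ∀ u : V, u ≠ 0 → 0 < nu ξ u)
    (L : Finset (Fin (m + 1))) (hL : IsDualFace ξ L ∨ L = Finset.univ)
    (pseq : ℕ → V) (p : V) :
    (∀ R > (0 : ℝ), ∀ ε > (0 : ℝ), ∃ N : ℕ, ∀ n ≥ N, ∀ u : V, ‖u‖ ≤ R →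
        |nu ξ (pseq n - u) - nu ξ (pseq n) - (nuL ξ L (p - u) - nuL ξ L p)| < ε) ↔
      (∀ q ∈ HLplus ξ L,
        Filter.Tendsto (fun n => Metric.infDist (pseq n) ((fun h => p + q + h) '' HLplus ξ L))
          Filter.atTop (nhds 0)) :=
  horofunction_convergence_criterion_general ξ hfacet L hL pseq p
end

section
/- Let L ⊆ K be a dual face. Then the closure of the set of functions {u ↦ ν_L(p−u) − ν_L(p) : p ∈ V} in the space of real-valued functions on V with the topology of uniform convergence on bounded subsets of V equals the union, over all dual faces L' ⊆ K with L' ⊆ L, of the sets {u ↦ ν_{L'}(p−u) − ν_{L'}(p) : p ∈ V}. -/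
/-!
A point of the closure is a limit, along an ultrafilter on `p`, of `u ↦ ν_L(p − u) − ν_L(p)`.
Translating `p` along a point `v` of the face `L` (where `ξ_k v = 1` for `k ∈ L`) normalises
`ν_L(p) = 0`, so that every `ξ_k(p)`, `k ∈ L`, is nonpositive and hence either tends to `−∞` or
converges. The indices that converge form `L'`, and the limit is `u ↦ ν_{L'}(q − u)` for any `q`
realising the limits. Correcting `p` by a bounded amount into `⋂_{k ∈ L'} ker ξ_k` gives `w` with
`ξ_j w < 0` for `j ∈ L \ L'`; pushing `v` slightly along `w` shows that `L'` is a dual face.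

Conversely, if `v` lies on the face `L' ⊆ L`, then `ν_L(q + t v − u) = ν_{L'}(q − u) + t` for all
`u` in a given bounded set once `t` is large, so every function of the stratum of `L'` agrees with
one of the stratum of `L` on each bounded set.
-/

open Bornology

open Filter Set Topology
open scoped Pointwise

theorem Ultrafilter.tendsto_atBot_or_exists_tendsto_nhds {α : Type*} (𝒰 : Ultrafilter α)
    {f : α → ℝ} {b : ℝ} (hb : ∀ᶠ a in 𝒰, f a ≤ b) :
    Tendsto f 𝒰 atBot ∨ ∃ c, Tendsto f 𝒰 (𝓝 c) := by
  obtain ⟨H, -, hH⟩ := isCompact_univ.ultrafilter_le_nhds (𝒰.map fun a => (f a : EReal))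
    (by simp)
  rw [Ultrafilter.coe_map] at hH
  induction H using EReal.rec with
  | bot =>
    refine .inl (tendsto_atBot.2 fun M => ?_)
    filter_upwards [EReal.tendsto_nhds_bot_iff_real.1 hH M] with a ha
    exact (EReal.coe_lt_coe_iff.1 ha).le
  | coe c => exact .inr ⟨c, EReal.tendsto_coe.1 hH⟩
  | top =>
    obtain ⟨a, ha, hab⟩ := ((EReal.tendsto_nhds_top_iff_real.1 hH b).and hb).exists
    exact absurd (EReal.coe_lt_coe_iff.1 ha) hab.not_gt

theorem tendsto_finset_sup'_of_tendsto_atBot {ι α : Type*} {l : Filter α} {s t : Finset ι}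
    (hts : t ⊆ s) (ht : t.Nonempty) {F : ι → α → ℝ} {c : ι → ℝ}
    (hc : ∀ i ∈ t, Tendsto (F i) l (𝓝 (c i))) (hbot : ∀ i ∈ s, i ∉ t → Tendsto (F i) l atBot) :
    Tendsto (fun a => s.sup' (ht.mono hts) (F · a)) l (𝓝 (t.sup' ht c)) := by
  have hlim := Tendsto.finset_sup'_nhds_apply ht hc
  refine hlim.congr' ?_
  have hlarge := hlim.eventually (eventually_gt_nhds (sub_one_lt (t.sup' ht c)))
  have hsmall : ∀ᶠ a in l, ∀ i ∈ s, i ∉ t → F i a < t.sup' ht c - 1 :=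
    s.eventually_all.2 fun i hi => by
      by_cases hit : i ∈ t
      · exact Eventually.of_forall fun _ h => absurd hit h
      · exact ((hbot i hi hit).eventually_lt_atBot _).mono fun _ h _ => h
  filter_upwards [hlarge, hsmall] with a hlarge hsmall
  refine le_antisymm (Finset.sup'_mono _ hts ht) (Finset.sup'_le _ _ fun i hi => ?_)
  by_cases hit : i ∈ t
  · exact Finset.le_sup' (F · a) hit
  · exact (hsmall i hi hit).le.trans hlarge.le

-- The correction is `σ (T x)` for a linear right inverse `σ` of `T` onto its range.
theorem LinearMap.exists_tendsto_sub_ker {𝕜 E F α : Type*} [NontriviallyNormedField 𝕜]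
    [CompleteSpace 𝕜] [NormedAddCommGroup E] [NormedSpace 𝕜 E] [FiniteDimensional 𝕜 E]
    [NormedAddCommGroup F] [NormedSpace 𝕜 F] (T : E →ₗ[𝕜] F) {l : Filter α} [l.NeBot]
    {x : α → E} {y : F} (h : Tendsto (fun a => T (x a)) l (𝓝 y)) :
    ∃ q : E, T q = y ∧ ∃ z : α → E, (∀ a, T (z a) = 0) ∧ Tendsto (fun a => x a - z a) l (𝓝 q) := by
  obtain ⟨σ, hσ⟩ := T.rangeRestrict.exists_rightInverse_of_surjective T.range_rangeRestrict
  have hTσ : ∀ y, T (σ y) = y := fun y => congrArg Subtype.val (LinearMap.congr_fun hσ y)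
  have hy : y ∈ LinearMap.range T := (LinearMap.range T).closed_of_finiteDimensional.mem_of_tendsto
    h (Eventually.of_forall fun a => LinearMap.mem_range_self T (x a))
  refine ⟨σ ⟨y, hy⟩, hTσ _, fun a => x a - σ (T.rangeRestrict (x a)), fun a => ?_, ?_⟩
  · rw [map_sub, hTσ, LinearMap.codRestrict_apply, sub_self]
  · simp only [sub_sub_cancel]
    exact (σ.continuous_of_finiteDimensional.tendsto _).comp (tendsto_subtype_rng.2 h)

theorem UniformOnFun.tendsto_ofFun_of_eventually_eqOn {α β ι : Type*} [UniformSpace β]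
    {𝔖 : Set (Set α)} {F : ι → α → β} {f : α → β} {l : Filter ι}
    (h : ∀ s ∈ 𝔖, ∀ᶠ i in l, EqOn (F i) f s) :
    Tendsto (fun i => UniformOnFun.ofFun 𝔖 (F i)) l (𝓝 (UniformOnFun.ofFun 𝔖 f)) :=
  UniformOnFun.tendsto_iff_tendstoUniformlyOn.2 fun s hs u hu =>
    (h s hs).mono fun _ hi x hx => by
      simpa [hi hx] using refl_mem_uniformity hu

theorem UniformOnFun.closure_image_ofFun_subset {α β : Type*} [UniformSpace β]
    {𝔖 : Set (Set α)} (h𝔖 : ⋃₀ 𝔖 = univ) (S : Set (α → β)) :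
    closure (UniformOnFun.ofFun 𝔖 '' S) ⊆ UniformOnFun.ofFun 𝔖 '' closure S := by
  intro G hG
  refine ⟨UniformOnFun.toFun 𝔖 G, ?_, rfl⟩
  have := image_closure_subset_closure_image (UniformOnFun.uniformContinuous_toFun h𝔖).continuous
    (mem_image_of_mem _ hG)
  simpa only [image_image, UniformOnFun.toFun_ofFun, image_id'] using this

section Algebra

variable {V : Type*} [AddCommGroup V] [Module ℝ V] {m : ℕ} (ξ : Fin (m + 1) → V →ₗ[ℝ] ℝ)

noncomputable def stratumFun (L : Finset (Fin (m + 1))) (p : V) : V → ℝ :=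
  fun u => nuL ξ L (p - u) - nuL ξ L p

theorem nuL_of_nonempty {L : Finset (Fin (m + 1))} (hL : L.Nonempty) (u : V) :
    nuL ξ L u = L.sup' hL fun ℓ => ξ ℓ u :=
  dif_pos hL

theorem isDualFace_iff {L : Finset (Fin (m + 1))} :
    IsDualFace ξ L ↔ L.Nonempty ∧ ∃ v : V, (∀ k ∈ L, ξ k v = 1) ∧ ∀ k ∉ L, ξ k v < 1 := by
  constructor
  · rintro ⟨v, hv, hL⟩
    have hle : ∀ k, ξ k v ≤ 1 := fun k => hv ▸ Finset.le_sup' (fun k => ξ k v) (Finset.mem_univ k)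
    obtain ⟨k, -, hk⟩ := Finset.exists_mem_eq_sup' Finset.univ_nonempty fun k => ξ k v
    refine ⟨⟨k, (hL k).2 (hk ▸ hv)⟩, v, fun k hk => (hL k).1 hk, fun k hk => ?_⟩
    exact (hle k).lt_of_ne fun h => hk ((hL k).2 h)
  · rintro ⟨⟨k₀, hk₀⟩, v, hv, hv'⟩
    have hle : ∀ k, ξ k v ≤ 1 := fun k => by
      by_cases hk : k ∈ L
      exacts [(hv k hk).le, (hv' k hk).le]
    refine ⟨v, le_antisymm (Finset.sup'_le _ _ fun k _ => hle k) ?_, fun k => ?_⟩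
    · exact hv k₀ hk₀ ▸ Finset.le_sup' (fun k => ξ k v) (Finset.mem_univ k₀)
    · exact ⟨hv k, fun h => by_contra fun hk => (hv' k hk).ne h⟩

theorem nuL_add_smul {L : Finset (Fin (m + 1))} (hL : L.Nonempty) {v : V}
    (hv : ∀ k ∈ L, ξ k v = 1) (x : V) (c : ℝ) : nuL ξ L (x + c • v) = nuL ξ L x + c := by
  rw [nuL_of_nonempty ξ hL, nuL_of_nonempty ξ hL, Finset.sup'_add]
  refine Finset.sup'_congr hL rfl fun k hk => ?_
  rw [map_add, map_smul, hv k hk, smul_eq_mul, mul_one]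

theorem stratumFun_eq_nuL_sub {L : Finset (Fin (m + 1))} (hL : L.Nonempty) {v : V}
    (hv : ∀ k ∈ L, ξ k v = 1) (p : V) :
    stratumFun ξ L p = fun u => nuL ξ L (p - nuL ξ L p • v - u) := by
  funext u
  rw [stratumFun, sub_right_comm, sub_eq_add_neg _ (_ • v), ← neg_smul, nuL_add_smul ξ hL hv,
    sub_eq_add_neg]

theorem IsDualFace.of_subset {L L' : Finset (Fin (m + 1))} (hL : IsDualFace ξ L) (hsub : L' ⊆ L)
    (hL' : L'.Nonempty) {w : V} (hw₀ : ∀ k ∈ L', ξ k w = 0) (hw : ∀ j ∈ L, j ∉ L' → ξ j w < 0) :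
    IsDualFace ξ L' := by
  obtain ⟨-, v, hv, hv'⟩ := (isDualFace_iff ξ).1 hL
  have hsmall : ∀ᶠ t in 𝓝 (0 : ℝ), ∀ k ∉ L, ξ k v + t * ξ k w < 1 := by
    refine eventually_all.2 fun k => ?_
    by_cases hk : k ∈ L
    · exact Eventually.of_forall fun _ h => absurd hk h
    · have : Tendsto (fun t : ℝ => ξ k v + t * ξ k w) (𝓝 0) (𝓝 (ξ k v)) := by
        simpa using (tendsto_const_nhds (x := ξ k v)).add
          ((tendsto_id (x := 𝓝 (0 : ℝ))).mul_const (ξ k w))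
      exact (this.eventually (eventually_lt_nhds (hv' k hk))).mono fun _ h _ => h
  obtain ⟨t, ht, htpos⟩ := ((hsmall.filter_mono nhdsWithin_le_nhds).and
    (self_mem_nhdsWithin : ∀ᶠ t in 𝓝[>] (0 : ℝ), 0 < t)).exists
  have hval : ∀ k, ξ k (v + t • w) = ξ k v + t * ξ k w := fun k => by
    rw [map_add, map_smul, smul_eq_mul]
  refine (isDualFace_iff ξ).2 ⟨hL', v + t • w, fun k hk => ?_, fun k hk => ?_⟩
  · rw [hval, hw₀ k hk, hv k (hsub hk), mul_zero, add_zero]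
  · rw [hval]
    by_cases hkL : k ∈ L
    · rw [hv k hkL]
      linarith [mul_neg_of_pos_of_neg htpos (hw k hkL hk)]
    · exact ht k hkL

end Algebra

section Normed

variable {V : Type*} [NormedAddCommGroup V] [NormedSpace ℝ V] [FiniteDimensional ℝ V] {m : ℕ}
  (ξ : Fin (m + 1) → V →ₗ[ℝ] ℝ)

theorem IsDualFace.of_tendsto {α : Type*} {L L' : Finset (Fin (m + 1))} (hL : IsDualFace ξ L)
    (hsub : L' ⊆ L) (hL' : L'.Nonempty) {l : Filter α} [l.NeBot] {x : α → V} {c : Fin (m + 1) → ℝ}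
    (hc : ∀ k ∈ L', Tendsto (fun a => ξ k (x a)) l (𝓝 (c k)))
    (hbot : ∀ j ∈ L, j ∉ L' → Tendsto (fun a => ξ j (x a)) l atBot) :
    IsDualFace ξ L' ∧ ∃ q : V, ∀ k ∈ L', ξ k q = c k := by
  obtain ⟨q, hq, z, hz, hxz⟩ := (LinearMap.pi fun k : L' => ξ k).exists_tendsto_sub_ker
    (x := x) (y := fun k => c k) (tendsto_pi_nhds.2 fun k => hc k k.2)
  replace hz : ∀ a, ∀ k ∈ L', ξ k (z a) = 0 := fun a k hk => congrFun (hz a) ⟨k, hk⟩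
  have hzbot : ∀ j ∈ L, j ∉ L' → ∀ᶠ a in l, ξ j (z a) < 0 := fun j hj hj' => by
    have hlim := ((ξ j).continuous_of_finiteDimensional.tendsto q).comp hxz
    refine (((hbot j hj hj').atBot_add hlim.neg).eventually_lt_atBot 0).mono fun a ha => ?_
    simpa [Function.comp_def] using ha
  obtain ⟨a, ha⟩ := (L.eventually_all.2 fun j hj =>
    (eventually_imp_distrib_left.2 fun hj' => hzbot j hj hj')).exists
  exact ⟨hL.of_subset ξ hsub hL' (hz a) ha, q, fun k hk => congrFun hq ⟨k, hk⟩⟩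

theorem exists_dualFace_of_tendsto {α : Type*} {L : Finset (Fin (m + 1))} (hL : IsDualFace ξ L)
    {𝒰 : Ultrafilter α} {x : α → V} (hx : ∀ a, nuL ξ L (x a) = 0) {g : V → ℝ}
    (hg : Tendsto (fun a u => nuL ξ L (x a - u)) 𝒰 (𝓝 g)) :
    ∃ L' : Finset (Fin (m + 1)), ∃ q : V, IsDualFace ξ L' ∧ L' ⊆ L ∧ g = stratumFun ξ L' q := by
  classical
  have hLne : L.Nonempty := ((isDualFace_iff ξ).1 hL).1
  have hle : ∀ k ∈ L, ∀ a, ξ k (x a) ≤ 0 := fun k hk a =>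
    (Finset.le_sup' (fun k => ξ k (x a)) hk).trans_eq ((nuL_of_nonempty ξ hLne _).symm.trans (hx a))
  set L' := L.filter fun k => ¬Tendsto (fun a => ξ k (x a)) 𝒰 atBot
  have hsub : L' ⊆ L := Finset.filter_subset _ _
  have hbot : ∀ j ∈ L, j ∉ L' → Tendsto (fun a => ξ j (x a)) 𝒰 atBot := fun j hj hj' => by
    simpa [L', hj] using hj'
  have hconv : ∀ k ∈ L', ∃ c, Tendsto (fun a => ξ k (x a)) 𝒰 (𝓝 c) := fun k hk =>
    (𝒰.tendsto_atBot_or_exists_tendsto_nhds (Eventually.of_forall (hle k (hsub hk)))).resolve_left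
      (Finset.mem_filter.1 hk).2
  choose! c hc using hconv
  have hL'ne : L'.Nonempty := by
    by_contra hemp
    have hneg : ∀ᶠ a in 𝒰, ∀ j ∈ L, ξ j (x a) < 0 := L.eventually_all.2 fun j hj =>
      (hbot j hj fun h => hemp ⟨j, h⟩).eventually_lt_atBot 0
    obtain ⟨a, ha⟩ := hneg.exists
    exact (hx a ▸ nuL_of_nonempty ξ hLne (x a) ▸ (Finset.sup'_lt_iff hLne).2 ha).false
  obtain ⟨hface, q, hq⟩ := hL.of_tendsto ξ hsub hL'ne hc hbot
  have hlim : ∀ u, Tendsto (fun a => nuL ξ L (x a - u)) 𝒰 (𝓝 (nuL ξ L' (q - u))) := fun u => by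
    simp only [nuL_of_nonempty ξ hLne, nuL_of_nonempty ξ hL'ne, map_sub]
    refine tendsto_finset_sup'_of_tendsto_atBot hsub hL'ne (fun k hk => ?_)
      fun j hj hj' => (hbot j hj hj').atBot_add tendsto_const_nhds
    rw [hq k hk]
    exact (hc k hk).sub_const _
  have hgu : ∀ u, g u = nuL ξ L' (q - u) := fun u =>
    tendsto_nhds_unique (tendsto_pi_nhds.1 hg u) (hlim u)
  have hq₀ : nuL ξ L' q = 0 := by
    simpa using tendsto_nhds_unique (hlim 0) (by simp [hx])
  exact ⟨L', q, hface, hsub, funext fun u => by simp [stratumFun, hgu, hq₀]⟩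

theorem exists_dualFace_of_mem_closure {L : Finset (Fin (m + 1))} (hL : IsDualFace ξ L)
    {g : V → ℝ} (hg : g ∈ closure (range (stratumFun ξ L))) :
    ∃ L' : Finset (Fin (m + 1)), ∃ q : V, IsDualFace ξ L' ∧ L' ⊆ L ∧ g = stratumFun ξ L' q := by
  obtain ⟨hLne, v, hv, -⟩ := (isDualFace_iff ξ).1 hL
  rw [mem_closure_iff_clusterPt, ← map_top] at hg
  obtain ⟨𝒰, -, h𝒰⟩ := mapClusterPt_iff_ultrafilter.1 hg
  refine exists_dualFace_of_tendsto ξ hL (𝒰 := 𝒰) (x := fun p => p - nuL ξ L p • v)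
    (fun p => ?_) ?_
  · rw [sub_eq_add_neg, ← neg_smul, nuL_add_smul ξ hLne hv, add_neg_cancel]
  · rwa [funext (stratumFun_eq_nuL_sub ξ hLne hv)] at h𝒰

theorem eventually_nuL_add_smul_eq_s16 {L L' : Finset (Fin (m + 1))} (hsub : L' ⊆ L)
    (hL' : L'.Nonempty) {v : V} (hv₁ : ∀ k ∈ L', ξ k v = 1) (hv : ∀ j ∈ L, j ∉ L' → ξ j v < 1)
    {s : Set V} (hs : IsBounded s) :
    ∀ᶠ t in atTop, ∀ x ∈ s, nuL ξ L (x + t • v) = nuL ξ L' x + t := by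
  obtain ⟨k₀, hk₀⟩ := hL'
  have hfar : ∀ j ∈ L, j ∉ L' →
      ∀ᶠ t : ℝ in atTop, ∀ x ∈ s, ξ j (x + t • v) ≤ ξ k₀ (x + t • v) := by
    intro j hj hj'
    obtain ⟨C, hC⟩ : BddAbove ((ξ j - ξ k₀) '' s) :=
      (LinearMap.toContinuousLinearMap (ξ j - ξ k₀)).lipschitz.isBounded_image hs |>.bddAbove
    have hgrow := (tendsto_id (α := ℝ)).atTop_mul_const (sub_pos.2 (hv j hj hj'))
    filter_upwards [hgrow.eventually_ge_atTop C] with t ht x hx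
    have hCx : ξ j x - ξ k₀ x ≤ C := hC ⟨x, hx, rfl⟩
    simp only [map_add, map_smul, smul_eq_mul, hv₁ k₀ hk₀, id] at ht ⊢
    linarith
  filter_upwards [L.eventually_all.2 fun j hj => eventually_imp_distrib_left.2 (hfar j hj)]
    with t ht x hx
  rw [← nuL_add_smul ξ ⟨k₀, hk₀⟩ hv₁, nuL_of_nonempty ξ ⟨k₀, hk₀⟩,
    nuL_of_nonempty ξ (⟨k₀, hsub hk₀⟩ : L.Nonempty)]
  refine le_antisymm (Finset.sup'_le _ _ fun k hk => ?_) (Finset.sup'_mono _ hsub _)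
  by_cases hk' : k ∈ L'
  · exact Finset.le_sup' (fun k => ξ k (x + t • v)) hk'
  · exact (ht k hk hk' x hx).trans (Finset.le_sup' (fun k => ξ k (x + t • v)) hk₀)

theorem tendsto_stratumFun_add_smul {L L' : Finset (Fin (m + 1))} (hsub : L' ⊆ L)
    (hL' : L'.Nonempty) {v : V} (hv₁ : ∀ k ∈ L', ξ k v = 1) (hv : ∀ j ∈ L, j ∉ L' → ξ j v < 1)
    (q : V) :
    Tendsto
      (fun t : ℝ => UniformOnFun.ofFun {s : Set V | IsBounded s} (stratumFun ξ L (q + t • v)))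
      atTop (𝓝 (UniformOnFun.ofFun {s : Set V | IsBounded s} (stratumFun ξ L' q))) := by
  refine UniformOnFun.tendsto_ofFun_of_eventually_eqOn fun s hs => ?_
  filter_upwards [eventually_nuL_add_smul_eq_s16 ξ hsub hL' hv₁ hv (s := {q} - insert 0 s)
    (isBounded_singleton.sub (hs.insert 0))] with t ht u hu
  have hq := ht q (by simp)
  have hqu := ht (q - u) (sub_mem_sub (mem_singleton q) (mem_insert_of_mem 0 hu))
  simp only [stratumFun, add_sub_right_comm q, hqu, hq]
  ring

end Normed

theorem closure_of_stratum_general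
    {V : Type*} [NormedAddCommGroup V] [InnerProductSpace ℝ V] [FiniteDimensional ℝ V]
    {m : ℕ} (ξ : Fin (m + 1) → V →ₗ[ℝ] ℝ)
    (L : Finset (Fin (m + 1))) (hL : IsDualFace ξ L) :
    closure (UniformOnFun.ofFun {s : Set V | IsBounded s} ''
        {f : V → ℝ | ∃ p : V, f = fun u => nuL ξ L (p - u) - nuL ξ L p})
      = UniformOnFun.ofFun {s : Set V | IsBounded s} ''
        {f : V → ℝ | ∃ L' : Finset (Fin (m + 1)), ∃ p : V,
          IsDualFace ξ L' ∧ L' ⊆ L ∧ f = fun u => nuL ξ L' (p - u) - nuL ξ L' p} := by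
  have hrange : {f : V → ℝ | ∃ p : V, f = fun u => nuL ξ L (p - u) - nuL ξ L p} =
      range (stratumFun ξ L) := by
    ext f
    exact exists_congr fun _ => eq_comm
  have hcover : ⋃₀ {s : Set V | IsBounded s} = univ :=
    sUnion_eq_univ_iff.2 fun x => ⟨{x}, isBounded_singleton, rfl⟩
  rw [hrange]
  refine (UniformOnFun.closure_image_ofFun_subset hcover _).trans (image_mono fun g hg => ?_)
    |>.antisymm ?_
  · exact exists_dualFace_of_mem_closure ξ hL hg
  · rintro _ ⟨_, ⟨L', q, hL', hsub, rfl⟩, rfl⟩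
    obtain ⟨hL'ne, v, hv₁, hv⟩ := (isDualFace_iff ξ).1 hL'
    exact mem_closure_of_tendsto
      (tendsto_stratumFun_add_smul ξ hsub hL'ne hv₁ (fun j _ hj => hv j hj) q)
      (Eventually.of_forall fun t => mem_image_of_mem _ (mem_range_self _))

/-- Let `L ⊆ K` be a dual face. The closure of
`{u ↦ ν_L(p−u) − ν_L(p) : p ∈ V}` in the topology of uniform convergence on bounded subsets
of `V` is the union, over all dual faces `L' ⊆ L`, of the sets
`{u ↦ ν_{L'}(p−u) − ν_{L'}(p) : p ∈ V}`. -/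
theorem closure_of_stratum
    {V : Type*} [NormedAddCommGroup V] [InnerProductSpace ℝ V] [FiniteDimensional ℝ V]
    {m : ℕ} (ξ : Fin (m + 1) → V →ₗ[ℝ] ℝ)
    (hfacet : ∀ k, ∃ u : V, ξ k u = 1 ∧ ∀ l, l ≠ k → ξ l u < 1)
    (hpos : ∀ u : V, u ≠ 0 → 0 < nu ξ u)
    (L : Finset (Fin (m + 1))) (hL : IsDualFace ξ L) :
    closure (UniformOnFun.ofFun {s : Set V | IsBounded s} ''
        {f : V → ℝ | ∃ p : V, f = fun u => nuL ξ L (p - u) - nuL ξ L p})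
      = UniformOnFun.ofFun {s : Set V | IsBounded s} ''
        {f : V → ℝ | ∃ L' : Finset (Fin (m + 1)), ∃ p : V,
          IsDualFace ξ L' ∧ L' ⊆ L ∧ f = fun u => nuL ξ L' (p - u) - nuL ξ L' p} :=
  closure_of_stratum_general ξ L hL
end
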